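/- Let S consist of 2n points given as n pairs {p_i, q_i} in a metric space, let T be a minimum spanning tree of S, let h be a maximum-weight edge of T, and let T_1, T_2 be the vertex sets of the two components of T after removing h. If both points of some pair lie in T_1 and both points of some pair lie in T_2, then mstCost(S) ≤ (3/2) · min over all feasible colorings S = R ∪ B of (mstCost(R) + mstCost(B)). -/

import Mathlib

/-!
Write `w` for the weight of `h`. Since `T` is minimal, exchanging `h` for any edge between
`T₁` and `T₂` cannot make `T` cheaper, so every point of `T₁` is at distance at least `w` from
every point of `T₂`. For a feasible coloring `R ∪ B`, each colour class contains a point of the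
pair inside `T₁` and one of the pair inside `T₂`, so each of its spanning trees has an edge
crossing the cut: `w ≤ mstCost R` and `w ≤ mstCost B`. On the other hand, the path in `T`
between the two points of a pair leaves `R` along an edge of weight at most `w`, and joining
optimal trees of `R` and `B` by that edge gives
`mstCost S ≤ mstCost R + mstCost B + w ≤ (3/2) (mstCost R + mstCost B)`.
-/

variable {α : Type*} [MetricSpace α] [DecidableEq α]

/-- Two points are connected via the edge set `E` (edges usable in both directions). -/
def EdgeConn (E : Finset (α × α)) (x y : α) : Prop :=
  Relation.ReflTransGen (fun a b => (a, b) ∈ E ∨ (b, a) ∈ E) x y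

/-- `E` is (the edge set of) a spanning tree of the complete graph on the finite
point set `X`. -/
def IsSpanningTreeOn (X : Finset α) (E : Finset (α × α)) : Prop :=
  (∀ e ∈ E, e.1 ∈ X ∧ e.2 ∈ X) ∧ E.card + 1 = X.card ∧
    ∀ x ∈ X, ∀ y ∈ X, EdgeConn E x y

/-- The minimum total edge length of a spanning tree on `X`. -/
noncomputable def mstCost (X : Finset α) : ℝ :=
  sInf {c | ∃ E : Finset (α × α), IsSpanningTreeOn X E ∧ c = ∑ e ∈ E, dist e.1 e.2}

def EdgeAdj (E : Finset (α × α)) (a b : α) : Prop :=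
  (a, b) ∈ E ∨ (b, a) ∈ E

namespace EdgeAdj

variable {E : Finset (α × α)} {a b : α}

omit [MetricSpace α] [DecidableEq α] in
theorem symm (hab : EdgeAdj E a b) : EdgeAdj E b a :=
  Or.symm hab

omit [MetricSpace α] [DecidableEq α] in
theorem mono {E' : Finset (α × α)} (hE : E ⊆ E') (hab : EdgeAdj E a b) : EdgeAdj E' a b :=
  hab.imp (@hE _) (@hE _)

omit [MetricSpace α] [DecidableEq α] in
theorem mem_of_forall {X : Finset α} (hE : ∀ e ∈ E, e.1 ∈ X ∧ e.2 ∈ X) (hab : EdgeAdj E a b) :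
    a ∈ X ∧ b ∈ X :=
  hab.elim (hE _) fun h => (hE _ h).symm

omit [DecidableEq α] in
theorem dist_le_of_forall {c : ℝ} (hE : ∀ e ∈ E, dist e.1 e.2 ≤ c) (hab : EdgeAdj E a b) :
    dist a b ≤ c :=
  hab.elim (hE _) fun h => dist_comm a b ▸ hE _ h

omit [DecidableEq α] in
theorem dist_le_sum (hab : EdgeAdj E a b) : dist a b ≤ ∑ e ∈ E, dist e.1 e.2 :=
  hab.dist_le_of_forall fun _ he =>
    Finset.single_le_sum (f := fun e : α × α => dist e.1 e.2) (fun _ _ => dist_nonneg) he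

end EdgeAdj

namespace EdgeConn

variable {E : Finset (α × α)} {x y z : α}

omit [MetricSpace α] [DecidableEq α]

theorem single {a b : α} (hab : EdgeAdj E a b) : EdgeConn E a b :=
  Relation.ReflTransGen.single hab

theorem trans (hxy : EdgeConn E x y) (hyz : EdgeConn E y z) : EdgeConn E x z :=
  Relation.ReflTransGen.trans hxy hyz

theorem symm (hxy : EdgeConn E x y) : EdgeConn E y x :=
  Relation.ReflTransGen.mono (fun _ _ => EdgeAdj.symm) _ _ (Relation.ReflTransGen.swap _ _ hxy)

theorem mono {E' : Finset (α × α)} (hE : E ⊆ E') (hxy : EdgeConn E x y) : EdgeConn E' x y :=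
  Relation.ReflTransGen.mono (fun _ _ => EdgeAdj.mono hE) _ _ hxy

theorem exists_edgeAdj_of_mem_of_notMem {P : Finset α} (hxy : EdgeConn E x y) (hx : x ∈ P)
    (hy : y ∉ P) : ∃ u v, EdgeAdj E u v ∧ u ∈ P ∧ v ∉ P := by
  induction hxy with
  | refl => exact absurd hx hy
  | @tail b c _ hbc ih =>
    by_cases hb : b ∈ P
    · exact ⟨b, c, hbc, hb, hy⟩
    · exact ih hb

end EdgeConn

omit [MetricSpace α] [DecidableEq α] in
theorem edgeConn_of_forall_edgeConn_to {X : Finset α} {E : Finset (α × α)} (u : α)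
    (hX : ∀ x ∈ X, EdgeConn E x u) : ∀ x ∈ X, ∀ y ∈ X, EdgeConn E x y :=
  fun x hx y hy => (hX x hx).trans (hX y hy).symm

omit [MetricSpace α] in
theorem exists_isSpanningTreeOn {X : Finset α} (hX : X.Nonempty) :
    ∃ E : Finset (α × α), IsSpanningTreeOn X E := by
  obtain ⟨x₀, hx₀⟩ := hX
  refine ⟨(X.erase x₀).image (x₀, ·), ?_, ?_, ?_⟩
  · simp only [Finset.mem_image, Finset.mem_erase]
    rintro _ ⟨y, ⟨-, hy⟩, rfl⟩
    exact ⟨hx₀, hy⟩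
  · rw [Finset.card_image_of_injective _ (Prod.mk_right_injective x₀),
      Finset.card_erase_add_one hx₀]
  · refine edgeConn_of_forall_edgeConn_to x₀ fun z hz => ?_
    rcases eq_or_ne z x₀ with rfl | hne
    · exact .refl
    · exact EdgeConn.single (Or.inr (Finset.mem_image_of_mem _ (Finset.mem_erase.2 ⟨hne, hz⟩)))

omit [MetricSpace α] in
theorem isSpanningTreeOn_insert {A B : Finset α} {E : Finset (α × α)} {u v : α}
    (hE : ∀ e ∈ E, e.1 ∈ A ∪ B ∧ e.2 ∈ A ∪ B) (hcard : E.card + 2 = (A ∪ B).card)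
    (huv : (u, v) ∉ E) (hu : u ∈ A) (hv : v ∈ B)
    (hA : ∀ a ∈ A, EdgeConn E a u) (hB : ∀ b ∈ B, EdgeConn E b v) :
    IsSpanningTreeOn (A ∪ B) (insert (u, v) E) := by
  have hsub : E ⊆ insert (u, v) E := Finset.subset_insert _ _
  have hvu : EdgeConn (insert (u, v) E) v u :=
    EdgeConn.single (Or.inr (Finset.mem_insert_self _ _))
  refine ⟨?_, by rw [Finset.card_insert_of_notMem huv, ← hcard], ?_⟩
  · rintro e he
    rcases Finset.mem_insert.1 he with rfl | he
    · exact ⟨Finset.mem_union_left _ hu, Finset.mem_union_right _ hv⟩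
    · exact hE e he
  · refine edgeConn_of_forall_edgeConn_to u fun x hx => ?_
    rcases Finset.mem_union.1 hx with hxA | hxB
    · exact (hA x hxA).mono hsub
    · exact ((hB x hxB).mono hsub).trans hvu

omit [DecidableEq α] in
theorem mstCost_le {X : Finset α} {E : Finset (α × α)} (hE : IsSpanningTreeOn X E) :
    mstCost X ≤ ∑ e ∈ E, dist e.1 e.2 :=
  csInf_le ⟨0, by rintro _ ⟨E, -, rfl⟩; exact Finset.sum_nonneg fun _ _ => dist_nonneg⟩
    ⟨E, hE, rfl⟩

theorem le_mstCost {X : Finset α} (hX : X.Nonempty) {c : ℝ}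
    (hc : ∀ E, IsSpanningTreeOn X E → c ≤ ∑ e ∈ E, dist e.1 e.2) : c ≤ mstCost X := by
  obtain ⟨E, hE⟩ := exists_isSpanningTreeOn hX
  exact le_csInf ⟨_, E, hE, rfl⟩ (by rintro _ ⟨E, hE, rfl⟩; exact hc E hE)

theorem mstCost_union_le {R B : Finset α} (hRB : Disjoint R B) {u v : α} (hu : u ∈ R)
    (hv : v ∈ B) : mstCost (R ∪ B) ≤ mstCost R + mstCost B + dist u v := by
  have htree : ∀ ER EB, IsSpanningTreeOn R ER → IsSpanningTreeOn B EB →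
      mstCost (R ∪ B) ≤ (∑ e ∈ ER, dist e.1 e.2) + (∑ e ∈ EB, dist e.1 e.2) + dist u v := by
    intro ER EB hER hEB
    have hE : Disjoint ER EB := Finset.disjoint_left.2 fun e he he' =>
      Finset.disjoint_left.1 hRB (hER.1 e he).1 (hEB.1 e he').1
    have huv : (u, v) ∉ ER ∪ EB := by
      rintro h
      rcases Finset.mem_union.1 h with h | h
      · exact Finset.disjoint_left.1 hRB (hER.1 _ h).2 hv
      · exact Finset.disjoint_left.1 hRB hu (hEB.1 _ h).1
    have hT : IsSpanningTreeOn (R ∪ B) (insert (u, v) (ER ∪ EB)) := by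
      refine isSpanningTreeOn_insert ?_ ?_ huv hu hv
        (fun a ha => (hER.2.2 a ha u hu).mono Finset.subset_union_left)
        (fun b hb => (hEB.2.2 b hb v hv).mono Finset.subset_union_right)
      · intro e he
        rcases Finset.mem_union.1 he with h | h
        · exact (hER.1 e h).imp (Finset.mem_union_left _) (Finset.mem_union_left _)
        · exact (hEB.1 e h).imp (Finset.mem_union_right _) (Finset.mem_union_right _)
      · rw [Finset.card_union_of_disjoint hE, Finset.card_union_of_disjoint hRB, ← hER.2.1,
          ← hEB.2.1]
        ring
    have := mstCost_le hT
    rw [Finset.sum_insert huv, Finset.sum_union hE] at this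
    linarith
  have hBR : mstCost (R ∪ B) - dist u v - mstCost B ≤ mstCost R :=
    le_mstCost ⟨u, hu⟩ fun ER hER => by
      have : mstCost (R ∪ B) - dist u v - (∑ e ∈ ER, dist e.1 e.2) ≤ mstCost B :=
        le_mstCost ⟨v, hv⟩ fun EB hEB => by linarith [htree ER EB hER hEB]
      linarith
  linarith

theorem le_mstCost_of_le_dist {X T₁ T₂ : Finset α} (hX : X ⊆ T₁ ∪ T₂) (hdisj : Disjoint T₁ T₂)
    {a b : α} (ha : a ∈ X ∩ T₁) (hb : b ∈ X ∩ T₂) {c : ℝ}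
    (hc : ∀ u ∈ T₁, ∀ v ∈ T₂, c ≤ dist u v) : c ≤ mstCost X := by
  rw [Finset.mem_inter] at ha hb
  refine le_mstCost ⟨a, ha.1⟩ fun E hE => ?_
  obtain ⟨u, v, huv, hu, hv⟩ := (hE.2.2 a ha.1 b hb.1).exists_edgeAdj_of_mem_of_notMem ha.2
    (Finset.disjoint_left.1 hdisj · hb.2)
  have hv₂ : v ∈ T₂ :=
    (Finset.mem_union.1 (hX (huv.mem_of_forall hE.1).2)).resolve_left hv
  exact (hc u hu v hv₂).trans huv.dist_le_sum

section Exchange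

variable {S T₁ T₂ : Finset α} {T : Finset (α × α)} {h : α × α}

theorem dist_le_of_cut (hT : IsSpanningTreeOn S T)
    (hTmin : (∑ e ∈ T, dist e.1 e.2) = mstCost S) (hh : h ∈ T)
    (hpart : T₁ ∪ T₂ = S) (hdisj : Disjoint T₁ T₂)
    (hcomp : ∀ x ∈ S, ∀ y ∈ S,
      EdgeConn (T.erase h) x y ↔ ((x ∈ T₁ ∧ y ∈ T₁) ∨ (x ∈ T₂ ∧ y ∈ T₂)))
    {u v : α} (hu : u ∈ T₁) (hv : v ∈ T₂) : dist h.1 h.2 ≤ dist u v := by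
  subst hpart
  have huS : u ∈ T₁ ∪ T₂ := Finset.mem_union_left _ hu
  have hvS : v ∈ T₁ ∪ T₂ := Finset.mem_union_right _ hv
  have huv : (u, v) ∉ T.erase h := fun huv => by
    rcases (hcomp u huS v hvS).1 (EdgeConn.single (Or.inl huv)) with ⟨-, hv₁⟩ | ⟨hu₂, -⟩
    · exact Finset.disjoint_left.1 hdisj hv₁ hv
    · exact Finset.disjoint_left.1 hdisj hu hu₂
  have hexch : IsSpanningTreeOn (T₁ ∪ T₂) (insert (u, v) (T.erase h)) :=
    isSpanningTreeOn_insert (fun e he => hT.1 e (Finset.mem_of_mem_erase he))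
      (by rw [← hT.2.1, ← Finset.card_erase_add_one hh]) huv hu hv
      (fun a ha => (hcomp a (Finset.mem_union_left _ ha) u huS).2 (Or.inl ⟨ha, hu⟩))
      (fun b hb => (hcomp b (Finset.mem_union_right _ hb) v hvS).2 (Or.inr ⟨hb, hv⟩))
  have := mstCost_le hexch
  rw [Finset.sum_insert huv, ← hTmin, ← Finset.add_sum_erase T _ hh] at this
  linarith

theorem mstCost_le_three_halves_mul {w : ℝ} (hT : IsSpanningTreeOn S T)
    (hmax : ∀ e ∈ T, dist e.1 e.2 ≤ w) (hpart : T₁ ∪ T₂ = S) (hdisj : Disjoint T₁ T₂)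
    (hcut : ∀ u ∈ T₁, ∀ v ∈ T₂, w ≤ dist u v)
    {R B : Finset α} (hRB : R ∪ B = S) (hdRB : Disjoint R B)
    {r₁ r₂ b₁ b₂ : α} (hr₁ : r₁ ∈ R ∩ T₁) (hr₂ : r₂ ∈ R ∩ T₂)
    (hb₁ : b₁ ∈ B ∩ T₁) (hb₂ : b₂ ∈ B ∩ T₂) :
    mstCost S ≤ 3 / 2 * (mstCost R + mstCost B) := by
  have hwR : w ≤ mstCost R := le_mstCost_of_le_dist
    (hpart ▸ hRB ▸ Finset.subset_union_left) hdisj hr₁ hr₂ hcut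
  have hwB : w ≤ mstCost B := le_mstCost_of_le_dist
    (hpart ▸ hRB ▸ Finset.subset_union_right) hdisj hb₁ hb₂ hcut
  have hrR := (Finset.mem_inter.1 hr₁).1
  have hbB := (Finset.mem_inter.1 hb₁).1
  obtain ⟨u, v, huv, hu, hv⟩ := (hT.2.2 r₁ (hRB ▸ Finset.mem_union_left _ hrR) b₁
    (hRB ▸ Finset.mem_union_right _ hbB)).exists_edgeAdj_of_mem_of_notMem hrR
    (Finset.disjoint_left.1 hdRB · hbB)
  have hvB : v ∈ B := (Finset.mem_union.1 (hRB ▸ (huv.mem_of_forall hT.1).2)).resolve_left hv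
  have hjoin := hRB ▸ mstCost_union_le hdRB hu hvB
  linarith [huv.dist_le_of_forall hmax]

end Exchange

section Coloring

omit [MetricSpace α]

variable {ι : Type*} [Fintype ι] (f : ι × Bool → α) (σ : ι → Bool)

theorem image_union_image_not :
    Finset.univ.image (fun i => f (i, σ i)) ∪ Finset.univ.image (fun i => f (i, !(σ i))) =
      Finset.univ.image f := by
  ext x
  simp only [Finset.mem_union, Finset.mem_image, Finset.mem_univ, true_and]
  constructor
  · rintro (⟨i, rfl⟩ | ⟨i, rfl⟩) <;> exact ⟨_, rfl⟩
  · rintro ⟨⟨i, b⟩, rfl⟩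
    rcases Bool.eq_or_eq_not b (σ i) with rfl | rfl
    exacts [Or.inl ⟨i, rfl⟩, Or.inr ⟨i, rfl⟩]

variable {f} in
theorem disjoint_image_image_not (hf : Function.Injective f) :
    Disjoint (Finset.univ.image fun i => f (i, σ i))
      (Finset.univ.image fun i => f (i, !(σ i))) := by
  simp only [Finset.disjoint_left, Finset.mem_image, Finset.mem_univ, true_and]
  rintro _ ⟨i, rfl⟩ ⟨j, hji⟩
  obtain ⟨rfl, hσ⟩ := Prod.ext_iff.1 (hf hji)
  exact Bool.not_ne_self _ hσ

end Coloring

theorem mst_total_bounded_by_opt_general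
    (n : ℕ)
    (pts : Fin n × Bool → α) (hinj : Function.Injective pts)
    (S : Finset α) (hS : S = Finset.image pts Finset.univ)
    (T : Finset (α × α)) (hT : IsSpanningTreeOn S T)
    (hTmin : (∑ e ∈ T, dist e.1 e.2) = mstCost S)
    (h : α × α) (hh : h ∈ T) (hmax : ∀ e ∈ T, dist e.1 e.2 ≤ dist h.1 h.2)
    (T₁ T₂ : Finset α) (hpart : T₁ ∪ T₂ = S) (hdisj : Disjoint T₁ T₂)
    (hcomp : ∀ x ∈ S, ∀ y ∈ S,
      EdgeConn (T.erase h) x y ↔ ((x ∈ T₁ ∧ y ∈ T₁) ∨ (x ∈ T₂ ∧ y ∈ T₂)))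
    (hpairT₁ : ∃ i : Fin n, pts (i, false) ∈ T₁ ∧ pts (i, true) ∈ T₁)
    (hpairT₂ : ∃ i : Fin n, pts (i, false) ∈ T₂ ∧ pts (i, true) ∈ T₂) :
    mstCost S ≤ (3 / 2) *
      ⨅ σ : Fin n → Bool,
        (mstCost (Finset.image (fun i => pts (i, σ i)) Finset.univ) +
         mstCost (Finset.image (fun i => pts (i, !(σ i))) Finset.univ)) := by
  obtain ⟨i₁, hp₁, hq₁⟩ := hpairT₁
  obtain ⟨i₂, hp₂, hq₂⟩ := hpairT₂
  have hpair₁ : ∀ b, pts (i₁, b) ∈ T₁ := Bool.forall_bool.2 ⟨hp₁, hq₁⟩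
  have hpair₂ : ∀ b, pts (i₂, b) ∈ T₂ := Bool.forall_bool.2 ⟨hp₂, hq₂⟩
  have hmem (τ : Fin n → Bool) (i : Fin n) {U : Finset α} (hU : pts (i, τ i) ∈ U) :
      pts (i, τ i) ∈ Finset.univ.image (fun j => pts (j, τ j)) ∩ U :=
    Finset.mem_inter.2 ⟨Finset.mem_image_of_mem _ (Finset.mem_univ i), hU⟩
  have hcut : ∀ u ∈ T₁, ∀ v ∈ T₂, dist h.1 h.2 ≤ dist u v := fun u hu v hv =>
    dist_le_of_cut hT hTmin hh hpart hdisj hcomp hu hv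
  rw [Real.mul_iInf_of_nonneg (by norm_num)]
  exact le_ciInf fun σ => mstCost_le_three_halves_mul hT hmax hpart hdisj hcut
    (hS ▸ image_union_image_not pts σ) (disjoint_image_image_not σ hinj)
    (hmem σ i₁ (hpair₁ _)) (hmem σ i₂ (hpair₂ _))
    (hmem (fun i => !(σ i)) i₁ (hpair₁ _)) (hmem (fun i => !(σ i)) i₂ (hpair₂ _))

/-- `S` consists of `n` pairs `{pts (i, false), pts (i, true)}`. Let `T` be
a minimum spanning tree of `S`, `h` a maximum-weight edge of `T`, and `T₁, T₂` the vertex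
sets of the two components of `T` after removing `h`. If both points of some pair lie in
`T₁` and both points of some pair lie in `T₂`, then
`mstCost S ≤ (3/2) · min over feasible colorings of (mstCost R + mstCost B)`. -/
theorem mst_total_bounded_by_opt
    (n : ℕ) (hn : 1 ≤ n)
    (pts : Fin n × Bool → α) (hinj : Function.Injective pts)
    (S : Finset α) (hS : S = Finset.image pts Finset.univ)
    (T : Finset (α × α)) (hT : IsSpanningTreeOn S T)
    (hTmin : (∑ e ∈ T, dist e.1 e.2) = mstCost S)
    (h : α × α) (hh : h ∈ T) (hmax : ∀ e ∈ T, dist e.1 e.2 ≤ dist h.1 h.2)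
    (T₁ T₂ : Finset α) (hpart : T₁ ∪ T₂ = S) (hdisj : Disjoint T₁ T₂)
    (hne1 : T₁.Nonempty) (hne2 : T₂.Nonempty)
    (hcomp : ∀ x ∈ S, ∀ y ∈ S,
      EdgeConn (T.erase h) x y ↔ ((x ∈ T₁ ∧ y ∈ T₁) ∨ (x ∈ T₂ ∧ y ∈ T₂)))
    (hpairT₁ : ∃ i : Fin n, pts (i, false) ∈ T₁ ∧ pts (i, true) ∈ T₁)
    (hpairT₂ : ∃ i : Fin n, pts (i, false) ∈ T₂ ∧ pts (i, true) ∈ T₂) :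
    mstCost S ≤ (3 / 2) *
      ⨅ σ : Fin n → Bool,
        (mstCost (Finset.image (fun i => pts (i, σ i)) Finset.univ) +
         mstCost (Finset.image (fun i => pts (i, !(σ i))) Finset.univ)) :=
  mst_total_bounded_by_opt_general n pts hinj S hS T hT hTmin h hh hmax T₁ T₂ hpart hdisj hcomp
    hpairT₁ hpairT₂
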